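/- arXiv:1004.1947 — 3 statements merged into one kernel-verified Lean document; each statement's English description precedes it below -/
import Mathlib

section
/- Every evident branch is satisfiable; moreover every complete evident branch has a surjective model, and every finite evident branch has a finite model. -/
/-- Simple types of STT: the type `o` of truth values is `base 0`, sorts are `base (α+1)`. -/
inductive Ty : Type
  | base : ℕ → Ty
  | arr : Ty → Ty → Ty
  deriving DecidableEq

abbrev Ty.o : Ty := Ty.base 0
abbrev Ty.sort (α : ℕ) : Ty := Ty.base (α + 1)

/-- Terms of STT: variables, negation, primitive equality at every type, application,
lambda abstraction. -/
inductive Tm : Ty → Type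
  | var : ℕ → (σ : Ty) → Tm σ
  | neg : Tm (Ty.arr Ty.o Ty.o)
  | eq : (σ : Ty) → Tm (Ty.arr σ (Ty.arr σ Ty.o))
  | app : ∀ {σ τ : Ty}, Tm (Ty.arr σ τ) → Tm σ → Tm τ
  | lam : ℕ → (σ : Ty) → ∀ {τ : Ty}, Tm τ → Tm (Ty.arr σ τ)

def Tm.Not (s : Tm Ty.o) : Tm Ty.o := Tm.app Tm.neg s
def Tm.Eqn {σ : Ty} (s t : Tm σ) : Tm Ty.o := Tm.app (Tm.app (Tm.eq σ) s) t
def Tm.Diseq {σ : Ty} (s t : Tm σ) : Tm Ty.o := Tm.Not (Tm.Eqn s t)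

/-- Argument lists (spines): `Args σ ρ` turns a head of type `σ` into a term of type `ρ`. -/
inductive Args : Ty → Ty → Type
  | nil : ∀ {ρ}, Args ρ ρ
  | cons : ∀ {σ τ ρ}, Tm σ → Args τ ρ → Args (Ty.arr σ τ) ρ

def applyArgs : ∀ {σ ρ : Ty}, Tm σ → Args σ ρ → Tm ρ
  | _, _, s, Args.nil => s
  | _, _, s, Args.cons t a => applyArgs (Tm.app s t) a

def nfArgs (f : (σ : Ty) → Tm σ → Tm σ) : ∀ {σ ρ : Ty}, Args σ ρ → Args σ ρ
  | _, _, Args.nil => Args.nil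
  | _, _, Args.cons t a => Args.cons (f _ t) (nfArgs f a)

/-- Pairs of equi-typed argument lists `s₁ … sₙ` and `t₁ … tₙ`. -/
inductive Args2 : Ty → Ty → Type
  | nil : ∀ {ρ}, Args2 ρ ρ
  | cons : ∀ {σ τ ρ}, Tm σ → Tm σ → Args2 τ ρ → Args2 (Ty.arr σ τ) ρ

def Args2.left : ∀ {σ ρ}, Args2 σ ρ → Args σ ρ
  | _, _, Args2.nil => Args.nil
  | _, _, Args2.cons s _ p => Args.cons s (Args2.left p)

def Args2.right : ∀ {σ ρ}, Args2 σ ρ → Args σ ρ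
  | _, _, Args2.nil => Args.nil
  | _, _, Args2.cons _ t p => Args.cons t (Args2.right p)

/-- The list of disequations `sᵢ ≠ tᵢ` of a pair of argument lists. -/
def Args2.diseqs : ∀ {σ ρ}, Args2 σ ρ → List (Tm Ty.o)
  | _, _, Args2.nil => []
  | _, _, Args2.cons s t p => Tm.Diseq s t :: Args2.diseqs p

/-- Atomic heads: names (variables and the logical constants). -/
inductive Atomic : ∀ {σ : Ty}, Tm σ → Prop
  | var : ∀ n σ, Atomic (Tm.var n σ)
  | neg : Atomic Tm.neg
  | eq : ∀ σ, Atomic (Tm.eq σ)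

/-- Update a substitution at the name `(x, σ0)`. -/
def updS (θ : ℕ → (σ : Ty) → Option (Tm σ)) (x : ℕ) (σ0 : Ty) (t : Tm σ0) :
    ℕ → (σ : Ty) → Option (Tm σ) := fun n σ =>
  if h : n = x ∧ σ = σ0 then some (h.2.symm ▸ t) else θ n σ

/-- A normalization operator with an accompanying substitution operation,
satisfying N1–N3 and S1–S4. -/
structure NormOp : Type where
  nf : ∀ {σ : Ty}, Tm σ → Tm σ
  sub : (ℕ → (σ : Ty) → Option (Tm σ)) → ∀ {σ : Ty}, Tm σ → Tm σ
  n1 : ∀ {σ : Ty} (s : Tm σ), nf (nf s) = nf s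
  n2 : ∀ {σ τ : Ty} (s : Tm (Ty.arr σ τ)) (t : Tm σ), nf (Tm.app (nf s) t) = nf (Tm.app s t)
  n3 : ∀ {σ : Ty} {β : ℕ} (h : Tm σ), Atomic h → ∀ a : Args σ (Ty.base β),
      nf (applyArgs h a) = applyArgs h (nfArgs (fun _ s => nf s) a)
  s1 : ∀ θ (n : ℕ) (σ : Ty), sub θ (Tm.var n σ) = (θ n σ).getD (Tm.var n σ)
  s1neg : ∀ θ, sub θ Tm.neg = Tm.neg
  s1eq : ∀ θ (σ : Ty), sub θ (Tm.eq σ) = Tm.eq σ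
  s2 : ∀ θ {σ τ : Ty} (s : Tm (Ty.arr σ τ)) (t : Tm σ),
      sub θ (Tm.app s t) = Tm.app (sub θ s) (sub θ t)
  s3 : ∀ θ (x : ℕ) (σ : Ty) {τ : Ty} (s : Tm τ) (t : Tm σ),
      nf (Tm.app (sub θ (Tm.lam x σ s)) t) = nf (sub (updS θ x σ t) s)
  s4 : ∀ {σ : Ty} (s : Tm σ), nf (sub (fun _ _ => none) s) = nf s

/-- The evidence conditions for a branch `E`. -/
structure Evident (Ω : NormOp) (E : Set (Tm Ty.o)) : Prop where
  dn : ∀ s : Tm Ty.o, Tm.Not (Tm.Not s) ∈ E → s ∈ E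
  bq : ∀ s t : Tm Ty.o, Tm.Eqn s t ∈ E → (s ∈ E ∧ t ∈ E) ∨ (Tm.Not s ∈ E ∧ Tm.Not t ∈ E)
  be : ∀ s t : Tm Ty.o, Tm.Diseq s t ∈ E → (s ∈ E ∧ Tm.Not t ∈ E) ∨ (Tm.Not s ∈ E ∧ t ∈ E)
  fq : ∀ {σ τ : Ty} (s t : Tm (Ty.arr σ τ)), Tm.Eqn s t ∈ E → ∀ u : Tm σ, Ω.nf u = u →
      Tm.Eqn (Ω.nf (Tm.app s u)) (Ω.nf (Tm.app t u)) ∈ E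
  fe : ∀ {σ τ : Ty} (s t : Tm (Ty.arr σ τ)), Tm.Diseq s t ∈ E →
      ∃ x : ℕ, Tm.Diseq (Ω.nf (Tm.app s (Tm.var x σ))) (Ω.nf (Tm.app t (Tm.var x σ))) ∈ E
  mat : ∀ {σ : Ty} (x : ℕ) (p : Args2 σ Ty.o),
      applyArgs (Tm.var x σ) p.left ∈ E → Tm.Not (applyArgs (Tm.var x σ) p.right) ∈ E →
      ∃ d ∈ p.diseqs, d ∈ E
  dec : ∀ {σ : Ty} {α : ℕ} (x : ℕ) (p : Args2 σ (Ty.sort α)),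
      Tm.Diseq (applyArgs (Tm.var x σ) p.left) (applyArgs (Tm.var x σ) p.right) ∈ E →
      ∃ d ∈ p.diseqs, d ∈ E
  con : ∀ {α : ℕ} (s t u v : Tm (Ty.sort α)), Tm.Eqn s t ∈ E → Tm.Diseq u v ∈ E →
      (Tm.Diseq s u ∈ E ∧ Tm.Diseq t u ∈ E) ∨ (Tm.Diseq s v ∈ E ∧ Tm.Diseq t v ∈ E)

/-- A term `u` is discriminating in `E` if it occurs on one side of a disequation in `E`. -/
def Discriminating (E : Set (Tm Ty.o)) {σ : Ty} (u : Tm σ) : Prop :=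
  ∃ t : Tm σ, Tm.Diseq u t ∈ E ∨ Tm.Diseq t u ∈ E

/-- An `α`-discriminant: a maximal set of `α`-discriminating terms no two of which are
related by a disequation in `E`. -/
def IsDiscriminant (E : Set (Tm Ty.o)) (α : ℕ) (a : Set (Tm (Ty.sort α))) : Prop :=
  (∀ u ∈ a, Discriminating E u) ∧
  (∀ s ∈ a, ∀ t ∈ a, Tm.Diseq s t ∉ E) ∧
  (∀ b : Set (Tm (Ty.sort α)), a ⊆ b → (∀ u ∈ b, Discriminating E u) →
    (∀ s ∈ b, ∀ t ∈ b, Tm.Diseq s t ∉ E) → b = a)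

/-- `s # t`: the disequation `s ≠ t` or `t ≠ s` belongs to `E`. -/
def hashE (E : Set (Tm Ty.o)) {σ : Ty} (s t : Tm σ) : Prop :=
  Tm.Diseq s t ∈ E ∨ Tm.Diseq t s ∈ E

/-- Compatibility of two terms relative to an evident branch, by induction on types. -/
def compat (Ω : NormOp) (E : Set (Tm Ty.o)) : (σ : Ty) → Tm σ → Tm σ → Prop
  | Ty.base 0 => fun s t =>
      ¬(Ω.nf s ∈ E ∧ Tm.Not (Ω.nf t) ∈ E) ∧ ¬(Tm.Not (Ω.nf s) ∈ E ∧ Ω.nf t ∈ E)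
  | Ty.base (α + 1) => fun s t => ¬ hashE E (Ω.nf s) (Ω.nf t)
  | Ty.arr σ τ => fun s t => ∀ u v : Tm σ, compat Ω E σ u v →
      compat Ω E τ (Tm.app s u) (Tm.app t v)

/-- `ExistsPairHashNf Ω E p` holds if `[sᵢ] # [tᵢ]` for some position `i` of `p`. -/
def ExistsPairHashNf (Ω : NormOp) (E : Set (Tm Ty.o)) : ∀ {σ ρ : Ty}, Args2 σ ρ → Prop
  | _, _, Args2.nil => False
  | _, _, Args2.cons s t p => hashE E (Ω.nf s) (Ω.nf t) ∨ ExistsPairHashNf Ω E p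

/-- The value system of an evident branch `E`: at `o` the values are booleans, at a sort the
values are `α`-discriminants, and at function types the logical-relation clause is used. -/
def sem (Ω : NormOp) (E : Set (Tm Ty.o)) : (σ : Ty) → (A : Type) × (Tm σ → A → Prop)
  | Ty.base 0 => ⟨Bool, fun s b => if b then Tm.Not (Ω.nf s) ∉ E else Ω.nf s ∉ E⟩
  | Ty.base (α + 1) => ⟨Set (Tm (Ty.sort α)), fun s a =>
      IsDiscriminant E α a ∧ (Discriminating E (Ω.nf s) → Ω.nf s ∈ a)⟩
  | Ty.arr σ τ =>
      ⟨{x : (sem Ω E σ).1 // ∃ t : Tm σ, (sem Ω E σ).2 t x} → (sem Ω E τ).1,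
       fun s f => ∀ (t : Tm σ) (x : (sem Ω E σ).1) (h : (sem Ω E σ).2 t x),
         (sem Ω E τ).2 (Tm.app s t) (f ⟨x, t, h⟩)⟩

/-- An applicative structure for STT: nonempty domains, `D(στ)` a set of functions
`D(σ) → D(τ)` (extensionality), `D(o) = {0,1}`, together with an assignment for the
variables and logical values for `¬` and `=_σ`. -/
structure Struc : Type 1 where
  D : Ty → Type
  ap : ∀ {σ τ : Ty}, D (Ty.arr σ τ) → D σ → D τ
  ext : ∀ {σ τ : Ty} (f g : D (Ty.arr σ τ)), (∀ a : D σ, ap f a = ap g a) → f = g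
  ne : ∀ σ : Ty, Nonempty (D σ)
  I : ℕ → ∀ σ : Ty, D σ
  bo : D Ty.o ≃ Bool
  negv : D (Ty.arr Ty.o Ty.o)
  eqv : ∀ σ : Ty, D (Ty.arr σ (Ty.arr σ Ty.o))
  hneg : ∀ b : D Ty.o, ap negv b = bo.symm (!(bo b))
  heq : ∀ {σ : Ty} (a b : D σ), ap (ap (eqv σ) a) b = bo.symm true ↔ a = b

/-- Update the assignment of a structure at the name `(m, σ0)`. -/
def updD (M : Struc) (I : ℕ → ∀ σ, M.D σ) (m : ℕ) (σ0 : Ty) (a : M.D σ0) :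
    ℕ → ∀ σ, M.D σ := fun n σ =>
  if h : n = m ∧ σ = σ0 then (h.2.symm ▸ a) else I n σ

/-- The evaluation relation of a logical structure. -/
inductive Eval (M : Struc) : (ℕ → ∀ σ, M.D σ) → ∀ σ : Ty, Tm σ → M.D σ → Prop
  | var : ∀ (I : ℕ → ∀ σ, M.D σ) (n : ℕ) (σ : Ty), Eval M I σ (Tm.var n σ) (I n σ)
  | neg : ∀ I : ℕ → ∀ σ, M.D σ, Eval M I (Ty.arr Ty.o Ty.o) Tm.neg M.negv
  | eq : ∀ (I : ℕ → ∀ σ, M.D σ) (σ : Ty), Eval M I (Ty.arr σ (Ty.arr σ Ty.o)) (Tm.eq σ) (M.eqv σ)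
  | app : ∀ {I : ℕ → ∀ σ, M.D σ} {σ τ : Ty} {s : Tm (Ty.arr σ τ)} {t : Tm σ}
      {f : M.D (Ty.arr σ τ)} {a : M.D σ},
      Eval M I (Ty.arr σ τ) s f → Eval M I σ t a → Eval M I τ (Tm.app s t) (M.ap f a)
  | lam : ∀ {I : ℕ → ∀ σ, M.D σ} (n : ℕ) (σ : Ty) {τ : Ty} (s : Tm τ) (f : M.D (Ty.arr σ τ)),
      (∀ a : M.D σ, Eval M (updD M I n σ a) τ s (M.ap f a)) →
      Eval M I (Ty.arr σ τ) (Tm.lam n σ s) f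

/-- A logical interpretation: a logical structure whose evaluation is total. -/
structure Interp : Type 1 extends Struc where
  total : ∀ (σ : Ty) (s : Tm σ), ∃ a : toStruc.D σ, Eval toStruc toStruc.I σ s a

/-- `M` is a model of the set of formulas `E`. -/
def Satisfies (M : Interp) (E : Set (Tm Ty.o)) : Prop :=
  ∀ s ∈ E, Eval M.toStruc M.I Ty.o s (M.bo.symm true)

/-- A surjective interpretation: every value is denoted by some term. -/
def Surj (M : Interp) : Prop :=
  ∀ (σ : Ty) (a : M.D σ), ∃ s : Tm σ, Eval M.toStruc M.I σ s a

/-- A complete branch: contains `s` or `¬s` for every normal formula `s`. -/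
def CompleteBranch (Ω : NormOp) (E : Set (Tm Ty.o)) : Prop :=
  ∀ s : Tm Ty.o, Ω.nf s = s → s ∈ E ∨ Tm.Not s ∈ E

/-- The abstract consistency conditions on a set of branches `Γ`. -/
structure ACC (Ω : NormOp) (Γ : Set (Set (Tm Ty.o))) : Prop where
  dn : ∀ A ∈ Γ, ∀ s : Tm Ty.o, Tm.Not (Tm.Not s) ∈ A → insert s A ∈ Γ
  bq : ∀ A ∈ Γ, ∀ s t : Tm Ty.o, Tm.Eqn s t ∈ A →
      insert s (insert t A) ∈ Γ ∨ insert (Tm.Not s) (insert (Tm.Not t) A) ∈ Γ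
  be : ∀ A ∈ Γ, ∀ s t : Tm Ty.o, Tm.Diseq s t ∈ A →
      insert s (insert (Tm.Not t) A) ∈ Γ ∨ insert (Tm.Not s) (insert t A) ∈ Γ
  fq : ∀ A ∈ Γ, ∀ {σ τ : Ty} (s t : Tm (Ty.arr σ τ)), Tm.Eqn s t ∈ A → ∀ u : Tm σ, Ω.nf u = u →
      insert (Tm.Eqn (Ω.nf (Tm.app s u)) (Ω.nf (Tm.app t u))) A ∈ Γ
  fe : ∀ A ∈ Γ, ∀ {σ τ : Ty} (s t : Tm (Ty.arr σ τ)), Tm.Diseq s t ∈ A →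
      ∃ x : ℕ, insert (Tm.Diseq (Ω.nf (Tm.app s (Tm.var x σ))) (Ω.nf (Tm.app t (Tm.var x σ)))) A ∈ Γ
  mat : ∀ A ∈ Γ, ∀ {σ : Ty} (x : ℕ) (p : Args2 σ Ty.o),
      applyArgs (Tm.var x σ) p.left ∈ A → Tm.Not (applyArgs (Tm.var x σ) p.right) ∈ A →
      ∃ d ∈ p.diseqs, insert d A ∈ Γ
  dec : ∀ A ∈ Γ, ∀ {σ : Ty} {α : ℕ} (x : ℕ) (p : Args2 σ (Ty.sort α)),
      Tm.Diseq (applyArgs (Tm.var x σ) p.left) (applyArgs (Tm.var x σ) p.right) ∈ A →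
      ∃ d ∈ p.diseqs, insert d A ∈ Γ
  con : ∀ A ∈ Γ, ∀ {α : ℕ} (s t u v : Tm (Ty.sort α)), Tm.Eqn s t ∈ A → Tm.Diseq u v ∈ A →
      insert (Tm.Diseq s u) (insert (Tm.Diseq t u) A) ∈ Γ ∨
      insert (Tm.Diseq s v) (insert (Tm.Diseq t v) A) ∈ Γ

/-- A complete abstract consistency class. -/
def CompleteACC (Ω : NormOp) (Γ : Set (Set (Tm Ty.o))) : Prop :=
  ∀ A ∈ Γ, ∀ s : Tm Ty.o, Ω.nf s = s → insert s A ∈ Γ ∨ insert (Tm.Not s) A ∈ Γ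

/-- Free occurrence of the name `(x, μ)` in a term. -/
def FreeIn (x : ℕ) (μ : Ty) : ∀ {σ : Ty}, Tm σ → Prop
  | _, Tm.var n σ => x = n ∧ μ = σ
  | _, Tm.app s t => FreeIn x μ s ∨ FreeIn x μ t
  | _, Tm.lam n σ s => ¬(x = n ∧ μ = σ) ∧ FreeIn x μ s
  | _, _ => False

/-- A closed branch: contains `x` and `¬x` for a variable `x : o`, or `x ≠ x` at a sort. -/
def ClosedB (A : Set (Tm Ty.o)) : Prop :=
  (∃ x : ℕ, Tm.var x Ty.o ∈ A ∧ Tm.Not (Tm.var x Ty.o) ∈ A) ∨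
  (∃ (α : ℕ) (x : ℕ), Tm.Diseq (Tm.var x (Ty.sort α)) (Tm.var x (Ty.sort α)) ∈ A)

/-- Refutability in the cut-free tableau calculus `T` for STT, with the restrictions that
rules are applied only to non-closed branches and functional extensionality is applied only
once per disequation. -/
inductive Refutable (Ω : NormOp) : Set (Tm Ty.o) → Prop
  | closed : ∀ {A : Set (Tm Ty.o)}, ClosedB A → Refutable Ω A
  | dn : ∀ {A : Set (Tm Ty.o)} {s : Tm Ty.o}, ¬ClosedB A → Tm.Not (Tm.Not s) ∈ A →
      Refutable Ω (insert s A) → Refutable Ω A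
  | bq : ∀ {A : Set (Tm Ty.o)} (s t : Tm Ty.o), ¬ClosedB A → Tm.Eqn s t ∈ A →
      Refutable Ω (insert s (insert t A)) →
      Refutable Ω (insert (Tm.Not s) (insert (Tm.Not t) A)) → Refutable Ω A
  | be : ∀ {A : Set (Tm Ty.o)} (s t : Tm Ty.o), ¬ClosedB A → Tm.Diseq s t ∈ A →
      Refutable Ω (insert s (insert (Tm.Not t) A)) →
      Refutable Ω (insert (Tm.Not s) (insert t A)) → Refutable Ω A
  | fq : ∀ {A : Set (Tm Ty.o)} {σ τ : Ty} (s t : Tm (Ty.arr σ τ)) (u : Tm σ), ¬ClosedB A →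
      Tm.Eqn s t ∈ A → Ω.nf u = u →
      Refutable Ω (insert (Tm.Eqn (Ω.nf (Tm.app s u)) (Ω.nf (Tm.app t u))) A) → Refutable Ω A
  | fe : ∀ {A : Set (Tm Ty.o)} {σ τ : Ty} (s t : Tm (Ty.arr σ τ)) (x : ℕ), ¬ClosedB A →
      Tm.Diseq s t ∈ A → (∀ u ∈ A, ¬ FreeIn x σ u) →
      (¬∃ y : ℕ, Tm.Diseq (Ω.nf (Tm.app s (Tm.var y σ))) (Ω.nf (Tm.app t (Tm.var y σ))) ∈ A) →
      Refutable Ω (insert (Tm.Diseq (Ω.nf (Tm.app s (Tm.var x σ))) (Ω.nf (Tm.app t (Tm.var x σ)))) A) →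
      Refutable Ω A
  | mat : ∀ {A : Set (Tm Ty.o)} {σ : Ty} (x : ℕ) (p : Args2 σ Ty.o), ¬ClosedB A →
      applyArgs (Tm.var x σ) p.left ∈ A → Tm.Not (applyArgs (Tm.var x σ) p.right) ∈ A →
      (∀ d ∈ p.diseqs, Refutable Ω (insert d A)) → Refutable Ω A
  | dec : ∀ {A : Set (Tm Ty.o)} {σ : Ty} {α : ℕ} (x : ℕ) (p : Args2 σ (Ty.sort α)), ¬ClosedB A →
      Tm.Diseq (applyArgs (Tm.var x σ) p.left) (applyArgs (Tm.var x σ) p.right) ∈ A →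
      (∀ d ∈ p.diseqs, Refutable Ω (insert d A)) → Refutable Ω A
  | con : ∀ {A : Set (Tm Ty.o)} {α : ℕ} (s t u v : Tm (Ty.sort α)), ¬ClosedB A →
      Tm.Eqn s t ∈ A → Tm.Diseq u v ∈ A →
      Refutable Ω (insert (Tm.Diseq s u) (insert (Tm.Diseq t u) A)) →
      Refutable Ω (insert (Tm.Diseq s v) (insert (Tm.Diseq t v) A)) → Refutable Ω A

/-!
The model is read off the value system `sem Ω E`: a term realizes truth values at `o`, the
discriminants it belongs to at a sort, and relation-preserving functions at arrow types; the
domains are the values realized by some term. Two facts are proved together by induction on types: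
terms sharing a value are never disequal in `E`, and every variable realizes some value. For the
second, a variable applied to argument spines realizing a fixed value spine gets a consistent
value: at `o` by Mat, at a sort by Dec together with Zorn's lemma for discriminants, and in both
cases through the first fact at the smaller argument types. Dually, BQ, FQ and Con show that terms
equated in `E` share their values, so `=` is interpreted as identity. A substitution lemma then
shows that every term evaluates to a value it realizes, whence every member of `E` is true.
For a complete branch `s = s ∈ E`, so each term realizes exactly one value and the model is
surjective; for a finite branch there are finitely many discriminating terms, hence finitely many
values at every type.
-/

noncomputable section

namespace NormOp

variable (Ω : NormOp)

theorem nf_not (s : Tm Ty.o) : Ω.nf (Tm.Not s) = Tm.Not (Ω.nf s) := by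
  simpa [applyArgs, nfArgs, Tm.Not] using Ω.n3 (β := 0) Tm.neg Atomic.neg (Args.cons s Args.nil)

theorem nf_eqn {σ : Ty} (s t : Tm σ) : Ω.nf (Tm.Eqn s t) = Tm.Eqn (Ω.nf s) (Ω.nf t) := by
  simpa [applyArgs, nfArgs, Tm.Eqn] using
    Ω.n3 (β := 0) (Tm.eq σ) (Atomic.eq σ) (Args.cons s (Args.cons t Args.nil))

end NormOp

theorem Tm.Diseq.inj {σ : Ty} {s t s' t' : Tm σ} (h : Tm.Diseq s t = Tm.Diseq s' t') :
    s = s' ∧ t = t' := by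
  simpa [Tm.Diseq, Tm.Not, Tm.Eqn] using h

def Ty.size : Ty → ℕ
  | Ty.base _ => 1
  | Ty.arr σ τ => σ.size + τ.size + 1

def Args.snoc : ∀ {σ α β : Ty}, Args σ (Ty.arr α β) → Tm α → Args σ β
  | _, _, _, Args.nil, t => Args.cons t Args.nil
  | _, _, _, Args.cons u a, t => Args.cons u (Args.snoc a t)

theorem applyArgs_snoc : ∀ {σ α β : Ty} (s : Tm σ) (a : Args σ (Ty.arr α β)) (t : Tm α),
    applyArgs s (Args.snoc a t) = Tm.app (applyArgs s a) t
  | _, _, _, _, Args.nil, _ => rfl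
  | _, _, _, s, Args.cons u a, t => applyArgs_snoc (Tm.app s u) a t

theorem updS_self (θ : ℕ → (σ : Ty) → Option (Tm σ)) (x : ℕ) (σ : Ty) (t : Tm σ) :
    updS θ x σ t x σ = some t :=
  dif_pos ⟨rfl, rfl⟩

theorem updS_of_ne (θ : ℕ → (σ : Ty) → Option (Tm σ)) {x n : ℕ} {σ μ : Ty} (t : Tm σ)
    (h : ¬(n = x ∧ μ = σ)) : updS θ x σ t n μ = θ n μ :=
  dif_neg h

theorem updD_self (M : Struc) (I : ℕ → ∀ σ, M.D σ) (x : ℕ) (σ : Ty) (a : M.D σ) :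
    updD M I x σ a x σ = a :=
  dif_pos ⟨rfl, rfl⟩

theorem updD_of_ne (M : Struc) (I : ℕ → ∀ σ, M.D σ) {x n : ℕ} {σ μ : Ty} (a : M.D σ)
    (h : ¬(n = x ∧ μ = σ)) : updD M I x σ a n μ = I n μ :=
  dif_neg h

namespace ModelExistence

variable (Ω : NormOp) (E : Set (Tm Ty.o))

def Realizes {σ : Ty} (s : Tm σ) (x : (sem Ω E σ).1) : Prop := (sem Ω E σ).2 s x

theorem realizes_o_iff (s : Tm Ty.o) (b : Bool) :
    Realizes Ω E s b ↔ if b then Tm.Not (Ω.nf s) ∉ E else Ω.nf s ∉ E := Iff.rfl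

theorem realizes_congr_nf : ∀ {σ : Ty} {s t : Tm σ}, Ω.nf s = Ω.nf t →
    ∀ x : (sem Ω E σ).1, Realizes Ω E s x ↔ Realizes Ω E t x
  | Ty.base 0, s, t, h, b => by simp only [Realizes, sem, h]
  | Ty.base (_ + 1), s, t, h, a => by simp only [Realizes, sem, h]
  | Ty.arr _ _, s, t, h, f => by
    have happ : ∀ u, Ω.nf (Tm.app s u) = Ω.nf (Tm.app t u) := fun u => by
      rw [← Ω.n2 s u, ← Ω.n2 t u, h]
    exact forall_congr' fun u => forall_congr' fun x => forall_congr' fun hx =>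
      realizes_congr_nf (happ u) _

theorem realizes_nf_iff {σ : Ty} (s : Tm σ) (x : (sem Ω E σ).1) :
    Realizes Ω E (Ω.nf s) x ↔ Realizes Ω E s x :=
  realizes_congr_nf Ω E (Ω.n1 s) x

theorem exists_isDiscriminant_superset {α : ℕ} (S : Set (Tm (Ty.sort α)))
    (hdisc : ∀ u ∈ S, Discriminating E u) (hfree : ∀ s ∈ S, ∀ t ∈ S, Tm.Diseq s t ∉ E) :
    ∃ a, IsDiscriminant E α a ∧ S ⊆ a := by
  let 𝒮 : Set (Set (Tm (Ty.sort α))) :=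
    {b | (∀ u ∈ b, Discriminating E u) ∧ ∀ s ∈ b, ∀ t ∈ b, Tm.Diseq s t ∉ E}
  have hchain : ∀ c ⊆ 𝒮, IsChain (· ⊆ ·) c → c.Nonempty → ∃ ub ∈ 𝒮, ∀ s ∈ c, s ⊆ ub := by
    refine fun c hc hch _ => ⟨⋃₀ c, ⟨?_, ?_⟩, fun s hs => Set.subset_sUnion_of_mem hs⟩
    · rintro u ⟨b, hb, hub⟩
      exact (hc hb).1 u hub
    · rintro s ⟨b₁, hb₁, hs⟩ t ⟨b₂, hb₂, ht⟩
      rcases hch.total hb₁ hb₂ with h | h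
      · exact (hc hb₂).2 s (h hs) t ht
      · exact (hc hb₁).2 s hs t (h ht)
  obtain ⟨m, hSm, hm⟩ := zorn_subset_nonempty 𝒮 hchain S ⟨hdisc, hfree⟩
  exact ⟨m, ⟨hm.prop.1, hm.prop.2, fun b hmb hb₁ hb₂ => (hm.2 ⟨hb₁, hb₂⟩ hmb).antisymm hmb⟩, hSm⟩

theorem IsDiscriminant.eq_of_union {α : ℕ} {a b : Set (Tm (Ty.sort α))}
    (ha : IsDiscriminant E α a) (hb : IsDiscriminant E α b)
    (hfree : ∀ u ∈ a ∪ b, ∀ v ∈ a ∪ b, Tm.Diseq u v ∉ E) : a = b := by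
  have hdisc : ∀ u ∈ a ∪ b, Discriminating E u := by
    rintro u (hu | hu)
    exacts [ha.1 u hu, hb.1 u hu]
  exact (ha.2.2 _ Set.subset_union_left hdisc hfree).symm.trans
    (hb.2.2 _ Set.subset_union_right hdisc hfree)

inductive ValSpine : Ty → Ty → Type
  | nil : ∀ {ρ}, ValSpine ρ ρ
  | cons : ∀ {σ τ ρ}, (sem Ω E σ).1 → ValSpine τ ρ → ValSpine (Ty.arr σ τ) ρ

def ValSpine.snoc : ∀ {σ α β : Ty}, ValSpine Ω E σ (Ty.arr α β) → (sem Ω E α).1 →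
    ValSpine Ω E σ β
  | _, _, _, ValSpine.nil, v => ValSpine.cons v ValSpine.nil
  | _, _, _, ValSpine.cons u q, v => ValSpine.cons u (ValSpine.snoc q v)

inductive SpineRealizes : ∀ {σ ρ : Ty}, Args σ ρ → ValSpine Ω E σ ρ → Prop
  | nil : ∀ {ρ}, SpineRealizes (Args.nil (ρ := ρ)) ValSpine.nil
  | cons : ∀ {σ τ ρ} {t : Tm σ} {v : (sem Ω E σ).1} {p : Args τ ρ} {q : ValSpine Ω E τ ρ},
      Realizes Ω E t v → SpineRealizes p q → SpineRealizes (Args.cons t p) (ValSpine.cons v q)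

def DiseqFree (σ : Ty) : Prop :=
  ∀ (s t : Tm σ) (v : (sem Ω E σ).1),
    Realizes Ω E s v → Realizes Ω E t v → Tm.Diseq (Ω.nf s) (Ω.nf t) ∉ E

def VarsRealized (σ : Ty) : Prop :=
  ∀ n : ℕ, ∃ v : (sem Ω E σ).1, Realizes Ω E (Tm.var n σ) v

variable {Ω E}

theorem SpineRealizes.snoc : ∀ {σ α β : Ty} {p : Args σ (Ty.arr α β)}
    {q : ValSpine Ω E σ (Ty.arr α β)} {t : Tm α} {v : (sem Ω E α).1},
    SpineRealizes Ω E p q → Realizes Ω E t v →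
      SpineRealizes Ω E (Args.snoc p t) (ValSpine.snoc Ω E q v)
  | _, _, _, Args.nil, _, _, _, .nil, hv => .cons hv .nil
  | _, _, _, Args.cons _ _, _, _, _, .cons hu hp, hv => .cons hu (hp.snoc hv)

theorem SpineRealizes.cons_inv {σ τ ρ : Ty} {p : Args (Ty.arr σ τ) ρ} {v : (sem Ω E σ).1}
    {q : ValSpine Ω E τ ρ} (h : SpineRealizes Ω E p (ValSpine.cons v q)) :
    ∃ t p', p = Args.cons t p' ∧ Realizes Ω E t v ∧ SpineRealizes Ω E p' q := by
  cases h with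
  | cons ht hp => exact ⟨_, _, rfl, ht, hp⟩

theorem SpineRealizes.zip : ∀ {σ ρ : Ty} {q : ValSpine Ω E σ ρ} {p p' : Args σ ρ},
    (∀ μ : Ty, μ.size < σ.size → DiseqFree Ω E μ) →
    SpineRealizes Ω E p q → SpineRealizes Ω E p' q →
    ∃ p₂ : Args2 σ ρ, p₂.left = nfArgs (fun _ s => Ω.nf s) p ∧
      p₂.right = nfArgs (fun _ s => Ω.nf s) p' ∧ ∀ d ∈ p₂.diseqs, d ∉ E
  | _, _, ValSpine.nil, _, _, _, .nil, .nil => ⟨Args2.nil, rfl, rfl, by simp [Args2.diseqs]⟩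
  | Ty.arr μ _, _, ValSpine.cons v _, _, _, hfree, h, h' => by
    obtain ⟨s, p, rfl, hs, hp⟩ := h.cons_inv
    obtain ⟨t, p', rfl, ht, hp'⟩ := h'.cons_inv
    obtain ⟨p₂, hl, hr, hd⟩ := hp.zip (fun μ' h => hfree μ' (by simp [Ty.size]; omega)) hp'
    refine ⟨Args2.cons (Ω.nf s) (Ω.nf t) p₂, by simp [Args2.left, nfArgs, hl],
      by simp [Args2.right, nfArgs, hr], ?_⟩
    simp only [Args2.diseqs, List.mem_cons, forall_eq_or_imp]
    exact ⟨hfree μ (by simp [Ty.size]) s t v hs ht, hd⟩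

theorem exists_realizes_applyArgs_var (hE : Evident Ω E) {σ : Ty}
    (hfree : ∀ μ : Ty, μ.size < σ.size → DiseqFree Ω E μ) (n : ℕ) :
    ∀ {ρ : Ty} (q : ValSpine Ω E σ ρ), ∃ d : (sem Ω E ρ).1,
      ∀ p : Args σ ρ, SpineRealizes Ω E p q → Realizes Ω E (applyArgs (Tm.var n σ) p) d
  | Ty.base β, q => by
    have hnf : ∀ p : Args σ (Ty.base β), Ω.nf (applyArgs (Tm.var n σ) p) =
        applyArgs (Tm.var n σ) (nfArgs (fun _ s => Ω.nf s) p) :=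
      Ω.n3 (Tm.var n σ) (Atomic.var n σ)
    have hzip : ∀ {p p'}, SpineRealizes Ω E p q → SpineRealizes Ω E p' q →
        ∃ p₂ : Args2 σ (Ty.base β),
          applyArgs (Tm.var n σ) p₂.left = Ω.nf (applyArgs (Tm.var n σ) p) ∧
          applyArgs (Tm.var n σ) p₂.right = Ω.nf (applyArgs (Tm.var n σ) p') ∧
          ∀ d ∈ p₂.diseqs, d ∉ E := fun hp hp' =>
      let ⟨p₂, hl, hr, hd⟩ := hp.zip hfree hp'
      ⟨p₂, by rw [hl, hnf], by rw [hr, hnf], hd⟩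
    cases β with
    | zero =>
      by_cases hpos : ∃ p, SpineRealizes Ω E p q ∧ Ω.nf (applyArgs (Tm.var n σ) p) ∈ E
      · obtain ⟨p₀, hp₀, hp₀E⟩ := hpos
        refine ⟨true, fun p hp => (realizes_o_iff Ω E _ true).mpr fun hneg => ?_⟩
        obtain ⟨p₂, hl, hr, hd⟩ := hzip hp₀ hp
        obtain ⟨d, hd', hdE⟩ := hE.mat n p₂ (hl ▸ hp₀E) (hr ▸ hneg)
        exact hd d hd' hdE
      · exact ⟨false, fun p hp => (realizes_o_iff Ω E _ false).mpr fun h => hpos ⟨p, hp, h⟩⟩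
    | succ α =>
      let S : Set (Tm (Ty.sort α)) := {u | Discriminating E u ∧
        ∃ p, SpineRealizes Ω E p q ∧ u = Ω.nf (applyArgs (Tm.var n σ) p)}
      have hSfree : ∀ s ∈ S, ∀ t ∈ S, Tm.Diseq s t ∉ E := by
        rintro _ ⟨-, p, hp, rfl⟩ _ ⟨-, p', hp', rfl⟩ hdq
        obtain ⟨p₂, hl, hr, hd⟩ := hzip hp hp'
        obtain ⟨d, hd', hdE⟩ := hE.dec n p₂ (hl ▸ hr ▸ hdq)
        exact hd d hd' hdE
      obtain ⟨a, ha, hSa⟩ := exists_isDiscriminant_superset E S (fun u hu => hu.1) hSfree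
      exact ⟨a, fun p hp => ⟨ha, fun hdisc => hSa ⟨hdisc, p, hp, rfl⟩⟩⟩
  | Ty.arr _ _, q => by
    choose d hd using fun v => exists_realizes_applyArgs_var hE hfree n (ValSpine.snoc Ω E q v)
    refine ⟨fun w => d w.1, fun p hp t x hx => ?_⟩
    simpa only [applyArgs_snoc, Realizes] using hd x (Args.snoc p t) (hp.snoc hx)

theorem diseqFree_of_lt (hE : Evident Ω E) {σ : Ty}
    (ih : ∀ μ : Ty, μ.size < σ.size → DiseqFree Ω E μ ∧ VarsRealized Ω E μ) :
    DiseqFree Ω E σ := by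
  intro s t v hs ht hdq
  rcases σ with ((_ | α) | ⟨σ, τ⟩)
  · simp only [Realizes, sem] at hs ht
    rcases hE.be _ _ hdq with ⟨h₁, h₂⟩ | ⟨h₁, h₂⟩ <;> cases v <;> simp_all
  · obtain ⟨⟨-, hfree, -⟩, hs⟩ := hs
    exact hfree _ (hs ⟨_, Or.inl hdq⟩) _ (ht.2 ⟨_, Or.inr hdq⟩) hdq
  · obtain ⟨x, hx⟩ := hE.fe (Ω.nf s) (Ω.nf t) hdq
    rw [Ω.n2, Ω.n2] at hx
    obtain ⟨ξ, hξ⟩ := (ih σ (by simp [Ty.size])).2 x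
    exact (ih τ (by simp [Ty.size])).1 _ _ _ (hs _ ξ hξ) (ht _ ξ hξ) hx

theorem diseqFree_and_varsRealized (hE : Evident Ω E) (σ : Ty) :
    DiseqFree Ω E σ ∧ VarsRealized Ω E σ :=
  have ih : ∀ μ : Ty, μ.size < σ.size → DiseqFree Ω E μ ∧ VarsRealized Ω E μ :=
    fun μ _ => diseqFree_and_varsRealized hE μ
  ⟨diseqFree_of_lt hE ih, fun n =>
    let ⟨d, hd⟩ := exists_realizes_applyArgs_var hE (fun μ h => (ih μ h).1) n ValSpine.nil
    ⟨d, hd Args.nil .nil⟩⟩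
termination_by σ.size

theorem diseqFree (hE : Evident Ω E) (σ : Ty) : DiseqFree Ω E σ :=
  (diseqFree_and_varsRealized hE σ).1

theorem varsRealized (hE : Evident Ω E) (σ : Ty) : VarsRealized Ω E σ :=
  (diseqFree_and_varsRealized hE σ).2

theorem eq_of_eqn_mem (hE : Evident Ω E) : ∀ {σ : Ty} {s t : Tm σ} {x y : (sem Ω E σ).1},
    Tm.Eqn (Ω.nf s) (Ω.nf t) ∈ E → Realizes Ω E s x → Realizes Ω E t y → x = y
  | Ty.base 0, s, t, x, y, heq, hx, hy => by
    simp only [Realizes, sem] at hx hy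
    rcases hE.bq _ _ heq with ⟨h₁, h₂⟩ | ⟨h₁, h₂⟩ <;> cases x <;> cases y <;> simp_all <;> rfl
  | Ty.base (_ + 1), s, t, a, b, heq, ⟨ha, hsa⟩, ⟨hb, htb⟩ => by
    refine IsDiscriminant.eq_of_union E ha hb ?_
    rintro u (hu | hu) v (hv | hv) hdq
    · exact ha.2.1 u hu v hv hdq
    · rcases hE.con _ _ u v heq hdq with ⟨h, -⟩ | ⟨-, h⟩
      · exact ha.2.1 _ (hsa ⟨u, Or.inl h⟩) _ hu h
      · exact hb.2.1 _ (htb ⟨v, Or.inl h⟩) _ hv h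
    · rcases hE.con _ _ u v heq hdq with ⟨-, h⟩ | ⟨h, -⟩
      · exact hb.2.1 _ (htb ⟨u, Or.inl h⟩) _ hu h
      · exact ha.2.1 _ (hsa ⟨v, Or.inl h⟩) _ hv h
    · exact hb.2.1 u hu v hv hdq
  | Ty.arr _ _, s, t, f, g, heq, hf, hg => by
    funext ⟨x, u, hu⟩
    have hu' : Realizes Ω E (Ω.nf u) x := (realizes_nf_iff Ω E u x).mpr hu
    have hfq := hE.fq (Ω.nf s) (Ω.nf t) heq (Ω.nf u) (Ω.n1 u)
    rw [Ω.n2, Ω.n2] at hfq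
    exact eq_of_eqn_mem hE hfq (hf _ x hu') (hg _ x hu')

variable (Ω E)

def Dom (σ : Ty) : Type := {x : (sem Ω E σ).1 // ∃ t : Tm σ, Realizes Ω E t x}

def Dom.ap {σ τ : Ty} (f : Dom Ω E (Ty.arr σ τ)) (a : Dom Ω E σ) : Dom Ω E τ :=
  ⟨f.1 a, by
    obtain ⟨s, hs⟩ := f.2
    obtain ⟨t, ht⟩ := a.2
    exact ⟨Tm.app s t, hs t a.1 ht⟩⟩

def negVal : (sem Ω E (Ty.arr Ty.o Ty.o)).1 := fun b => !b.1

open scoped Classical in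
def eqVal (σ : Ty) : (sem Ω E (Ty.arr σ (Ty.arr σ Ty.o))).1 := fun a b => decide (a.1 = b.1)

variable {Ω E}

theorem realizes_neg_negVal (hE : Evident Ω E) : Realizes Ω E Tm.neg (negVal Ω E) := by
  intro t x hx
  change Realizes Ω E (Tm.Not t) (!x)
  replace hx := (realizes_o_iff Ω E t x).mp hx
  rw [realizes_o_iff, Ω.nf_not]
  cases x
  · simpa using fun h => hx (hE.dn _ h)
  · simpa using hx

open scoped Classical in
theorem realizes_eq_eqVal (hE : Evident Ω E) (σ : Ty) : Realizes Ω E (Tm.eq σ) (eqVal Ω E σ) := by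
  intro s x hx t y hy
  change Realizes Ω E (Tm.Eqn s t) (decide (x = y))
  by_cases hxy : x = y
  · subst hxy
    simpa [realizes_o_iff, Ω.nf_not, Ω.nf_eqn, Tm.Diseq] using
      diseqFree hE σ s t x hx hy
  · simpa [realizes_o_iff, hxy, Ω.nf_eqn] using fun h => hxy (eq_of_eqn_mem hE h hx hy)

theorem exists_realizes_bool (hE : Evident Ω E) (b : Bool) : ∃ s : Tm Ty.o, Realizes Ω E s b := by
  obtain ⟨v, hv⟩ := varsRealized hE Ty.o 0
  by_cases hvb : v = b
  · exact ⟨_, hvb ▸ hv⟩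
  · refine ⟨Tm.Not (Tm.var 0 Ty.o), ?_⟩
    rw [show b = !v by cases b <;> cases v <;> simp_all]
    exact realizes_neg_negVal hE _ v hv

open scoped Classical in
variable (Ω E) in
def canonStruc (hE : Evident Ω E) : Struc where
  D := Dom Ω E
  ap := Dom.ap Ω E
  ext _ _ h := Subtype.ext (funext fun a => congrArg Subtype.val (h a))
  ne σ := let ⟨v, hv⟩ := varsRealized hE σ 0; ⟨⟨v, _, hv⟩⟩
  I n σ := ⟨(varsRealized hE σ n).choose, _, (varsRealized hE σ n).choose_spec⟩
  bo := Equiv.subtypeUnivEquiv (exists_realizes_bool hE)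
  negv := ⟨negVal Ω E, _, realizes_neg_negVal hE⟩
  eqv σ := ⟨eqVal Ω E σ, _, realizes_eq_eqVal hE σ⟩
  hneg _ := rfl
  heq _ _ := Subtype.ext_iff.trans (decide_eq_true_iff.trans Subtype.ext_iff.symm)

variable (Ω E) in
def SubstRealizes (θ : ℕ → (σ : Ty) → Option (Tm σ)) (I : ℕ → ∀ σ, Dom Ω E σ) : Prop :=
  ∀ (n : ℕ) (μ : Ty), Realizes Ω E ((θ n μ).getD (Tm.var n μ)) (I n μ).1

theorem SubstRealizes.upd (hE : Evident Ω E) {θ : ℕ → (σ : Ty) → Option (Tm σ)}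
    {I : ℕ → ∀ σ, Dom Ω E σ} (hθ : SubstRealizes Ω E θ I) (x : ℕ) (σ : Ty) (t : Tm σ)
    (a : Dom Ω E σ) (ha : Realizes Ω E t a.1) :
    SubstRealizes Ω E (updS θ x σ t) (updD (canonStruc Ω E hE) I x σ a) := by
  intro n μ
  by_cases h : n = x ∧ μ = σ
  · obtain ⟨rfl, rfl⟩ := h
    rw [updS_self]
    erw [updD_self]
    exact ha
  · erw [updS_of_ne _ _ h, updD_of_ne _ _ _ h]
    exact hθ n μ

theorem exists_eval_realizes_sub (hE : Evident Ω E) {σ : Ty} (s : Tm σ) :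
    ∀ I : ℕ → ∀ μ, Dom Ω E μ, ∃ d : Dom Ω E σ, Eval (canonStruc Ω E hE) I σ s d ∧
      ∀ θ, SubstRealizes Ω E θ I → Realizes Ω E (Ω.sub θ s) d.1 := by
  induction s with
  | var n σ =>
    exact fun I => ⟨I n σ, Eval.var (M := canonStruc Ω E hE) I n σ,
      fun θ hθ => by rw [Ω.s1]; exact hθ n σ⟩
  | neg =>
    exact fun I => ⟨_, Eval.neg (M := canonStruc Ω E hE) I,
      fun θ _ => by rw [Ω.s1neg]; exact realizes_neg_negVal hE⟩
  | eq σ =>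
    exact fun I => ⟨_, Eval.eq (M := canonStruc Ω E hE) I σ,
      fun θ _ => by rw [Ω.s1eq]; exact realizes_eq_eqVal hE σ⟩
  | app s t ihs iht =>
    intro I
    obtain ⟨f, hfe, hfr⟩ := ihs I
    obtain ⟨a, hae, har⟩ := iht I
    exact ⟨Dom.ap Ω E f a, .app hfe hae, fun θ hθ =>
      Ω.s2 θ s t ▸ hfr θ hθ (Ω.sub θ t) a.1 (har θ hθ)⟩
  | lam x σ s ih =>
    intro I
    choose g hge hgr using fun a : Dom Ω E σ => ih (updD (canonStruc Ω E hE) I x σ a)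
    have hlam : ∀ θ, SubstRealizes Ω E θ I →
        Realizes Ω E (Ω.sub θ (Tm.lam x σ s)) (fun a => (g a).1) := by
      intro θ hθ t v hv
      refine (realizes_congr_nf Ω E (Ω.s3 θ x σ s t) _).mpr (hgr _ _ ?_)
      exact hθ.upd hE x σ t ⟨v, t, hv⟩ hv
    -- substituting terms that realize the values of `I` gives a term realizing the value
    have hθI : SubstRealizes Ω E (fun n μ => some (I n μ).2.choose) I :=
      fun n μ => (I n μ).2.choose_spec
    exact ⟨⟨_, _, hlam _ hθI⟩, .lam x σ s _ hge, hlam⟩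

theorem exists_eval_realizes (hE : Evident Ω E) {σ : Ty} (s : Tm σ) :
    ∃ d : Dom Ω E σ, Eval (canonStruc Ω E hE) (canonStruc Ω E hE).I σ s d ∧
      Realizes Ω E s d.1 := by
  obtain ⟨d, he, hr⟩ := exists_eval_realizes_sub hE s (canonStruc Ω E hE).I
  have hid : SubstRealizes Ω E (fun _ _ => none) (canonStruc Ω E hE).I :=
    fun n μ => (varsRealized hE μ n).choose_spec
  exact ⟨d, he, (realizes_congr_nf Ω E (Ω.s4 s) _).mp (hr _ hid)⟩

variable (Ω E) in
def canonInterp (hE : Evident Ω E) : Interp where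
  toStruc := canonStruc Ω E hE
  total _ s := let ⟨d, hd, _⟩ := exists_eval_realizes hE s; ⟨d, hd⟩

theorem canonInterp_satisfies (hE : Evident Ω E) (hnorm : ∀ s ∈ E, Ω.nf s = s) :
    Satisfies (canonInterp Ω E hE) E := by
  intro s hs
  obtain ⟨d, he, hr⟩ := exists_eval_realizes hE s
  have hd : d = (canonInterp Ω E hE).bo.symm true := by
    refine Subtype.ext ?_
    have := (realizes_o_iff Ω E s d.1).mp hr
    cases h : d.1
    · simp_all
    · rfl
  exact hd ▸ he

theorem realizes_unique (hE : Evident Ω E) (hC : CompleteBranch Ω E) {σ : Ty} {s : Tm σ}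
    {x y : (sem Ω E σ).1} (hx : Realizes Ω E s x) (hy : Realizes Ω E s y) : x = y := by
  have hrefl : Tm.Eqn (Ω.nf s) (Ω.nf s) ∈ E := by
    refine (hC _ (by rw [Ω.nf_eqn, Ω.n1])).resolve_right fun h => ?_
    exact diseqFree hE σ s s x hx hx h
  exact eq_of_eqn_mem hE hrefl hx hy

theorem canonInterp_surj (hE : Evident Ω E) (hC : CompleteBranch Ω E) :
    Surj (canonInterp Ω E hE) := by
  intro σ a
  obtain ⟨t, ht⟩ := a.2
  obtain ⟨d, he, hd⟩ := exists_eval_realizes hE t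
  exact ⟨t, Subtype.ext (realizes_unique hE hC hd ht) ▸ he⟩

theorem finite_discriminating (hfin : E.Finite) (α : ℕ) :
    {u : Tm (Ty.sort α) | Discriminating E u}.Finite := by
  have hpairs : ((fun p : Tm (Ty.sort α) × Tm (Ty.sort α) => Tm.Diseq p.1 p.2) ⁻¹' E).Finite :=
    hfin.preimage fun p _ q _ h => Prod.ext_iff.mpr (Tm.Diseq.inj h)
  refine ((hpairs.image Prod.fst).union (hpairs.image Prod.snd)).subset ?_
  rintro u ⟨t, ht | ht⟩
  exacts [Or.inl ⟨(u, t), ht, rfl⟩, Or.inr ⟨(t, u), ht, rfl⟩]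

theorem finite_dom (hfin : E.Finite) : ∀ σ : Ty, Finite (Dom Ω E σ)
  | Ty.base 0 => Finite.of_injective (β := Bool) (fun d => d.1) Subtype.val_injective
  | Ty.base (α + 1) =>
    have := (finite_discriminating hfin α).powerset.to_subtype
    Finite.of_injective (β := 𝒫 {u | Discriminating E u})
      (fun d => ⟨d.1, let ⟨_, ht⟩ := d.2; ht.1.1⟩) fun _ _ h => Subtype.ext (Subtype.mk.inj h)
  | Ty.arr σ τ =>
    have := finite_dom hfin σ
    have := finite_dom hfin τ
    Finite.of_injective (fun f a => Dom.ap Ω E f a) fun _ _ h =>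
      Subtype.ext (funext fun a => congrArg Subtype.val (congrFun h a))

end ModelExistence

end

/-- Model Existence: every evident branch is satisfiable; every complete
evident branch has a surjective model; every finite evident branch has a finite model. -/
theorem stmt11 (Ω : NormOp) (E : Set (Tm Ty.o)) (hE : Evident Ω E)
    (hnorm : ∀ s ∈ E, Ω.nf s = s) :
    (∃ M : Interp, Satisfies M E) ∧
    (CompleteBranch Ω E → ∃ M : Interp, Satisfies M E ∧ Surj M) ∧
    (E.Finite → ∃ M : Interp, Satisfies M E ∧ ∀ σ : Ty, Finite (M.D σ)) := by
  have hsat := ModelExistence.canonInterp_satisfies hE hnorm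
  exact ⟨⟨_, hsat⟩, fun hC => ⟨_, hsat, ModelExistence.canonInterp_surj hE hC⟩,
    fun hfin => ⟨_, hsat, ModelExistence.finite_dom hfin⟩⟩
end

section
/- Extension Lemma: if Γ is an abstract consistency class and A ∈ Γ, then there exists an evident branch E with A ⊆ E; moreover if Γ is complete then E can be chosen to be a complete evident branch. -/
/-!
Every evidence condition is an instance of a rule with finitely many premises and a conclusion
that persists under enlarging the branch, and there are only countably many such instances.
Enumerate them so that each one recurs infinitely often and build a chain `A = A₀ ⊆ A₁ ⊆ ⋯` in
`Γ`, where `Aₙ₊₁` discharges the `n`-th instance whenever its premises lie in `Aₙ`, using the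
matching abstract consistency condition. The union `E` is evident: the premises of an instance
already lie in some `Aₘ`, and the instance is discharged at a later stage. If `Γ` is complete,
the instances "decide the normal formula `s`" are enumerated as well, which makes `E` complete.
-/

def Ty.code : Ty → ℕ
  | .base n => Nat.pair 0 n
  | .arr σ τ => Nat.pair 1 (Nat.pair σ.code τ.code)

theorem Ty.code_injective : Function.Injective Ty.code := by
  intro σ τ h
  induction σ generalizing τ with
  | base n => cases τ <;> simp_all [Ty.code]
  | arr σ₁ σ₂ ih₁ ih₂ =>
    cases τ <;> simp only [Ty.code, Nat.pair_eq_pair, reduceCtorEq, false_and, true_and] at h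
    rw [ih₁ h.1, ih₂ h.2]

instance : Countable Ty := Ty.code_injective.countable

def Tm.code : ∀ {σ : Ty}, Tm σ → ℕ
  | _, .var n σ => Nat.pair 0 (Nat.pair n σ.code)
  | _, .neg => Nat.pair 1 0
  | _, .eq σ => Nat.pair 2 σ.code
  | _, .app (σ := σ) s t => Nat.pair 3 (Nat.pair σ.code (Nat.pair s.code t.code))
  | _, .lam n σ s => Nat.pair 4 (Nat.pair n (Nat.pair σ.code s.code))

theorem Tm.code_injective {σ : Ty} : Function.Injective (@Tm.code σ) := by
  intro s
  induction s with
  | var n σ => intro t h; cases t <;> simp_all [Tm.code]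
  | neg => intro t h; cases t <;> simp_all [Tm.code]
  | eq σ => intro t h; cases t <;> simp_all [Tm.code]
  | app s u ihs ihu =>
    intro t h
    cases t with
    | app v w =>
      simp only [Tm.code, Nat.pair_eq_pair, true_and] at h
      obtain rfl := Ty.code_injective h.1
      rw [ihs h.2.1, ihu h.2.2]
    | _ => simp_all [Tm.code]
  | lam n σ s ihs =>
    intro t h
    cases t with
    | lam m τ v => simp only [Tm.code, Nat.pair_eq_pair, true_and] at h; rw [h.1, ihs h.2]
    | _ => simp_all [Tm.code]

instance (σ : Ty) : Countable (Tm σ) := Tm.code_injective.countable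

def Args2.code : ∀ {σ ρ : Ty}, Args2 σ ρ → List ℕ
  | _, _, .nil => []
  | _, _, .cons s t p => s.code :: t.code :: p.code

theorem Args2.code_injective {σ ρ : Ty} : Function.Injective (@Args2.code σ ρ) := by
  intro p
  induction p with
  | nil => intro q h; cases q <;> simp_all [Args2.code]
  | cons s t p ih =>
    intro q h
    cases q with
    | cons s' t' q =>
      simp only [Args2.code, List.cons.injEq] at h
      rw [Tm.code_injective h.1, Tm.code_injective h.2.1, ih h.2.2]
    | nil => cases h

instance (σ ρ : Ty) : Countable (Args2 σ ρ) := Args2.code_injective.countable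

section Saturation

variable {α T : Type*}

theorem Monotone.exists_subset_of_finite_subset_iUnion {c : ℕ → Set α} (hc : Monotone c)
    {s : Set α} (hs : s.Finite) (h : s ⊆ ⋃ n, c n) : ∃ n, s ⊆ c n := by
  simpa using hc.directed_le.exists_mem_subset_of_finset_subset_biUnion
    (s := hs.toFinset) (by simpa using h)

theorem exists_nat_frequently_eq [Countable T] [Nonempty T] :
    ∃ f : ℕ → T, ∀ t m, ∃ n, m ≤ n ∧ f n = t := by
  obtain ⟨g, hg⟩ := exists_surjective_nat T
  refine ⟨fun n => g n.unpair.1, fun t m => ?_⟩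
  obtain ⟨k, rfl⟩ := hg t
  exact ⟨Nat.pair k m, Nat.right_le_pair k m, by simp⟩

theorem exists_saturated_superset [Countable T] {Γ : Set (Set α)} (premises : T → Set α)
    (hfin : ∀ t, (premises t).Finite) (Conclusion : T → Set α → Prop)
    (hmono : ∀ t, Monotone (Conclusion t))
    (hΓ : ∀ t, ∀ B ∈ Γ, premises t ⊆ B → ∃ C ∈ Γ, B ⊆ C ∧ Conclusion t C)
    {A : Set α} (hA : A ∈ Γ) :
    ∃ E, A ⊆ E ∧ ∀ t, premises t ⊆ E → Conclusion t E := by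
  cases isEmpty_or_nonempty T
  · exact ⟨A, subset_rfl, fun t => isEmptyElim t⟩
  have hstep :
      ∀ t, ∀ B ∈ Γ, ∃ C ∈ Γ, B ⊆ C ∧ (premises t ⊆ B → Conclusion t C) := by
    intro t B hB
    by_cases h : premises t ⊆ B
    · obtain ⟨C, hC, hBC, hconcl⟩ := hΓ t B hB h
      exact ⟨C, hC, hBC, fun _ => hconcl⟩
    · exact ⟨B, hB, subset_rfl, fun h' => absurd h' h⟩
  choose next hnext_mem hnext_sup hnext_concl using hstep
  obtain ⟨f, hf⟩ := exists_nat_frequently_eq (T := T)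
  let c : ℕ → Γ := fun n =>
    Nat.rec ⟨A, hA⟩ (fun k B => ⟨next (f k) B B.2, hnext_mem _ _ B.2⟩) n
  have hc : Monotone fun n => (c n).1 := monotone_nat_of_le_succ fun n => hnext_sup _ _ _
  refine ⟨⋃ n, (c n).1, Set.subset_iUnion (fun n => (c n).1) 0, fun t ht => ?_⟩
  obtain ⟨m, hm⟩ := hc.exists_subset_of_finite_subset_iUnion (hfin t) ht
  obtain ⟨n, hmn, rfl⟩ := hf t m
  exact hmono _ (Set.subset_iUnion _ (n + 1)) (hnext_concl _ _ _ (hm.trans (hc hmn)))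

end Saturation

inductive EvidenceCondition : Type
  | dn : Tm Ty.o → EvidenceCondition
  | bq : Tm Ty.o → Tm Ty.o → EvidenceCondition
  | be : Tm Ty.o → Tm Ty.o → EvidenceCondition
  | fq : (σ τ : Ty) → Tm (Ty.arr σ τ) → Tm (Ty.arr σ τ) → Tm σ → EvidenceCondition
  | fe : (σ τ : Ty) → Tm (Ty.arr σ τ) → Tm (Ty.arr σ τ) → EvidenceCondition
  | mat : (σ : Ty) → ℕ → Args2 σ Ty.o → EvidenceCondition
  | dec : (σ : Ty) → (α : ℕ) → ℕ → Args2 σ (Ty.sort α) → EvidenceCondition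
  | con : (α : ℕ) → (s t u v : Tm (Ty.sort α)) → EvidenceCondition

namespace EvidenceCondition

def code : EvidenceCondition → List ℕ
  | dn s => [0, s.code]
  | bq s t => [1, s.code, t.code]
  | be s t => [2, s.code, t.code]
  | fq σ τ s t u => [3, σ.code, τ.code, s.code, t.code, u.code]
  | fe σ τ s t => [4, σ.code, τ.code, s.code, t.code]
  | mat σ x p => 5 :: σ.code :: x :: p.code
  | dec σ α x p => 6 :: σ.code :: α :: x :: p.code
  | con α s t u v => [7, α, s.code, t.code, u.code, v.code]

theorem code_injective : Function.Injective code := by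
  intro a b h
  cases a <;> cases b <;> simp [code, Ty.code_injective.eq_iff] at h <;>
    aesop (add norm simp [Tm.code_injective.eq_iff, Args2.code_injective.eq_iff])

instance : Countable EvidenceCondition := code_injective.countable

def premises : EvidenceCondition → Set (Tm Ty.o)
  | dn s => {Tm.Not (Tm.Not s)}
  | bq s t | fq _ _ s t _ => {Tm.Eqn s t}
  | be s t | fe _ _ s t => {Tm.Diseq s t}
  | mat σ x p => {applyArgs (Tm.var x σ) p.left, Tm.Not (applyArgs (Tm.var x σ) p.right)}
  | dec σ _ x p => {Tm.Diseq (applyArgs (Tm.var x σ) p.left) (applyArgs (Tm.var x σ) p.right)}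
  | con _ s t u v => {Tm.Eqn s t, Tm.Diseq u v}

theorem finite_premises (c : EvidenceCondition) : c.premises.Finite := by
  cases c <;> simp [premises]

def Conclusion (Ω : NormOp) : EvidenceCondition → Set (Tm Ty.o) → Prop
  | dn s, E => s ∈ E
  | bq s t, E => (s ∈ E ∧ t ∈ E) ∨ (Tm.Not s ∈ E ∧ Tm.Not t ∈ E)
  | be s t, E => (s ∈ E ∧ Tm.Not t ∈ E) ∨ (Tm.Not s ∈ E ∧ t ∈ E)
  | fq _ _ s t u, E => Ω.nf u = u → Tm.Eqn (Ω.nf (Tm.app s u)) (Ω.nf (Tm.app t u)) ∈ E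
  | fe σ _ s t, E =>
    ∃ x, Tm.Diseq (Ω.nf (Tm.app s (Tm.var x σ))) (Ω.nf (Tm.app t (Tm.var x σ))) ∈ E
  | mat _ _ p, E => ∃ d ∈ p.diseqs, d ∈ E
  | dec _ _ _ p, E => ∃ d ∈ p.diseqs, d ∈ E
  | con _ s t u v, E =>
    (Tm.Diseq s u ∈ E ∧ Tm.Diseq t u ∈ E) ∨ (Tm.Diseq s v ∈ E ∧ Tm.Diseq t v ∈ E)

theorem conclusion_mono (Ω : NormOp) (c : EvidenceCondition) : Monotone (c.Conclusion Ω) := by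
  intro B C hBC
  cases c <;> simp only [Conclusion, le_Prop_eq] <;> grind

end EvidenceCondition

theorem Evident.of_forall_conclusion {Ω : NormOp} {E : Set (Tm Ty.o)}
    (h : ∀ c : EvidenceCondition, c.premises ⊆ E → c.Conclusion Ω E) : Evident Ω E where
  dn s hs := h (.dn s) (Set.singleton_subset_iff.2 hs)
  bq s t hs := h (.bq s t) (Set.singleton_subset_iff.2 hs)
  be s t hs := h (.be s t) (Set.singleton_subset_iff.2 hs)
  fq s t hs u := h (.fq _ _ s t u) (Set.singleton_subset_iff.2 hs)
  fe s t hs := h (.fe _ _ s t) (Set.singleton_subset_iff.2 hs)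
  mat x p h₁ h₂ := h (.mat _ x p) (Set.pair_subset h₁ h₂)
  dec x p hs := h (.dec _ _ x p) (Set.singleton_subset_iff.2 hs)
  con s t u v h₁ h₂ := h (.con _ s t u v) (Set.pair_subset h₁ h₂)

theorem ACC.exists_conclusion {Ω : NormOp} {Γ : Set (Set (Tm Ty.o))} (hΓ : ACC Ω Γ)
    (c : EvidenceCondition) {B : Set (Tm Ty.o)} (hB : B ∈ Γ) (hc : c.premises ⊆ B) :
    ∃ C ∈ Γ, B ⊆ C ∧ c.Conclusion Ω C := by
  cases c with
  | dn s => exact ⟨_, hΓ.dn B hB s (hc rfl), Set.subset_insert _ _, Set.mem_insert _ _⟩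
  | bq s t =>
    rcases hΓ.bq B hB s t (hc rfl) with h | h <;>
      exact ⟨_, h, fun x hx => by simp [hx], by simp [EvidenceCondition.Conclusion]⟩
  | be s t =>
    rcases hΓ.be B hB s t (hc rfl) with h | h <;>
      exact ⟨_, h, fun x hx => by simp [hx], by simp [EvidenceCondition.Conclusion]⟩
  | fq _ _ s t u =>
    by_cases hu : Ω.nf u = u
    · exact ⟨_, hΓ.fq B hB s t (hc rfl) u hu, Set.subset_insert _ _,
        fun _ => Set.mem_insert _ _⟩
    · exact ⟨B, hB, subset_rfl, fun hu' => absurd hu' hu⟩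
  | fe _ _ s t =>
    obtain ⟨x, h⟩ := hΓ.fe B hB s t (hc rfl)
    exact ⟨_, h, Set.subset_insert _ _, x, Set.mem_insert _ _⟩
  | mat _ x p =>
    obtain ⟨d, hd, h⟩ := hΓ.mat B hB x p (hc (Or.inl rfl)) (hc (Or.inr rfl))
    exact ⟨_, h, Set.subset_insert _ _, d, hd, Set.mem_insert _ _⟩
  | dec _ _ x p =>
    obtain ⟨d, hd, h⟩ := hΓ.dec B hB x p (hc rfl)
    exact ⟨_, h, Set.subset_insert _ _, d, hd, Set.mem_insert _ _⟩
  | con _ s t u v =>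
    rcases hΓ.con B hB s t u v (hc (Or.inl rfl)) (hc (Or.inr rfl)) with h | h <;>
      exact ⟨_, h, fun x hx => by simp [hx], by simp [EvidenceCondition.Conclusion]⟩

theorem ACC.exists_evident_superset {Ω : NormOp} {Γ : Set (Set (Tm Ty.o))} (hΓ : ACC Ω Γ)
    {A : Set (Tm Ty.o)} (hA : A ∈ Γ) : ∃ E, A ⊆ E ∧ Evident Ω E := by
  obtain ⟨E, hAE, hE⟩ := exists_saturated_superset EvidenceCondition.premises
    EvidenceCondition.finite_premises (EvidenceCondition.Conclusion Ω)
    (EvidenceCondition.conclusion_mono Ω) (fun c _ hB => hΓ.exists_conclusion c hB) hA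
  exact ⟨E, hAE, .of_forall_conclusion hE⟩

theorem ACC.exists_complete_evident_superset {Ω : NormOp} {Γ : Set (Set (Tm Ty.o))}
    (hΓ : ACC Ω Γ) (hcomp : CompleteACC Ω Γ) {A : Set (Tm Ty.o)} (hA : A ∈ Γ) :
    ∃ E, A ⊆ E ∧ Evident Ω E ∧ CompleteBranch Ω E := by
  let Decided : {s : Tm Ty.o // Ω.nf s = s} → Set (Tm Ty.o) → Prop :=
    fun s E => s.1 ∈ E ∨ Tm.Not s.1 ∈ E
  have hdecide : ∀ s, ∀ B ∈ Γ, ∃ C ∈ Γ, B ⊆ C ∧ Decided s C := by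
    intro s B hB
    rcases hcomp B hB s.1 s.2 with h | h
    · exact ⟨_, h, Set.subset_insert _ _, Or.inl (Set.mem_insert _ _)⟩
    · exact ⟨_, h, Set.subset_insert _ _, Or.inr (Set.mem_insert _ _)⟩
  obtain ⟨E, hAE, hE⟩ := exists_saturated_superset
    (Sum.elim EvidenceCondition.premises fun _ => ∅)
    (Sum.rec EvidenceCondition.finite_premises fun _ => Set.finite_empty)
    (Sum.elim (EvidenceCondition.Conclusion Ω) Decided)
    (Sum.rec (EvidenceCondition.conclusion_mono Ω) fun _ _ _ hBC => Or.imp (@hBC _) (@hBC _))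
    (Sum.rec (fun c _ hB => hΓ.exists_conclusion c hB) fun s B hB _ => hdecide s B hB) hA
  exact ⟨E, hAE, .of_forall_conclusion fun c => hE (.inl c),
    fun s hs => hE (.inr ⟨s, hs⟩) (Set.empty_subset E)⟩

theorem stmt12_general (Ω : NormOp) (Γ : Set (Set (Tm Ty.o))) (hΓ : ACC Ω Γ)
    (A : Set (Tm Ty.o)) (hA : A ∈ Γ) :
    (∃ E : Set (Tm Ty.o), A ⊆ E ∧ Evident Ω E) ∧
    (CompleteACC Ω Γ → ∃ E : Set (Tm Ty.o), A ⊆ E ∧ Evident Ω E ∧ CompleteBranch Ω E) :=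
  ⟨hΓ.exists_evident_superset hA, fun hcomp => hΓ.exists_complete_evident_superset hcomp hA⟩

/-- Extension Lemma: every member of an abstract consistency class extends to
an evident branch; if the class is complete, to a complete evident branch. -/
theorem stmt12 (Ω : NormOp) (Γ : Set (Set (Tm Ty.o))) (hΓ : ACC Ω Γ)
    (hnorm : ∀ A ∈ Γ, ∀ s ∈ A, Ω.nf s = s)
    (A : Set (Tm Ty.o)) (hA : A ∈ Γ) :
    (∃ E : Set (Tm Ty.o), A ⊆ E ∧ Evident Ω E) ∧
    (CompleteACC Ω Γ → ∃ E : Set (Tm Ty.o), A ⊆ E ∧ Evident Ω E ∧ CompleteBranch Ω E) :=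
  stmt12_general Ω Γ hΓ A hA
end

section
/- Soundness of the tableau calculus: every refutable branch is unsatisfiable. Equivalently, for every rule instance A / A₁, …, Aₙ of T, if A is satisfiable then some Aᵢ is satisfiable. -/
/-!
Every rule of `T` preserves satisfiability: a model of a branch is a model of one of its
extensions. For all rules but FE it is the same model, the branching rules being split by the
two-valuedness of `o` and the identity interpretation of `=`; N4 lets the normal forms `[s u]`
be evaluated as `s u`. For FE the model is changed only at the fresh variable `x`, which is sent
to a point where the values of `s` and `t` differ. Refutable branches are therefore unsatisfiable,
by induction on refutations.
-/

namespace Eval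

variable {M : Struc}

theorem det {I : ℕ → ∀ σ, M.D σ} {σ : Ty} {s : Tm σ} {a b : M.D σ}
    (ha : Eval M I σ s a) (hb : Eval M I σ s b) : a = b := by
  induction ha with
  | var => cases hb; rfl
  | neg => cases hb; rfl
  | eq => cases hb; rfl
  | app _ _ ih₁ ih₂ =>
    cases hb with
    | app hb₁ hb₂ => rw [ih₁ hb₁, ih₂ hb₂]
  | lam _ _ _ _ _ ih =>
    cases hb with
    | lam _ _ _ _ hb => exact M.ext _ _ fun c => ih c (hb c)

theorem of_agree_on_free {I : ℕ → ∀ σ, M.D σ} {σ : Ty} {s : Tm σ} {a : M.D σ}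
    (h : Eval M I σ s a) {I' : ℕ → ∀ σ, M.D σ} (hI : ∀ y μ, FreeIn y μ s → I y μ = I' y μ) :
    Eval M I' σ s a := by
  induction h generalizing I' with
  | var I n σ =>
    rw [hI n σ ⟨rfl, rfl⟩]
    exact Eval.var I' n σ
  | neg => exact Eval.neg I'
  | eq _ σ => exact Eval.eq I' σ
  | app _ _ ih₁ ih₂ =>
    exact Eval.app (ih₁ fun y μ h => hI y μ (Or.inl h)) (ih₂ fun y μ h => hI y μ (Or.inr h))
  | lam n σ s f _ ih =>
    refine Eval.lam n σ s f fun c => ih c fun y μ hy => ?_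
    by_cases hbound : y = n ∧ μ = σ
    · obtain ⟨rfl, rfl⟩ := hbound
      simp [updD]
    · simp only [updD, dif_neg hbound]
      exact hI y μ ⟨hbound, hy⟩

/-- `Eval M I` reads the assignment only through `I`, never through the field `M.I`. -/
theorem withAssignment (f : ℕ → ∀ σ, M.D σ) {I : ℕ → ∀ σ, M.D σ} {σ : Ty} {s : Tm σ}
    {a : M.D σ} (h : Eval M I σ s a) : Eval { M with I := f } I σ s a := by
  induction h with
  | var I n σ => exact Eval.var (M := { M with I := f }) I n σ
  | neg I => exact Eval.neg (M := { M with I := f }) I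
  | eq I σ => exact Eval.eq (M := { M with I := f }) I σ
  | app _ _ ih₁ ih₂ => exact Eval.app ih₁ ih₂
  | lam n σ s g _ ih => exact Eval.lam (M := { M with I := f }) n σ s g ih

/-- Totality survives updating the assignment, since `λx. s` has a value whose
applications to `c` evaluate `s` under the updated assignment. -/
theorem exists_of_updD {I : ℕ → ∀ σ, M.D σ} (htot : ∀ (σ : Ty) (s : Tm σ), ∃ a, Eval M I σ s a)
    (x : ℕ) (σ₀ : Ty) (c : M.D σ₀) (σ : Ty) (s : Tm σ) :
    ∃ a, Eval M (updD M I x σ₀ c) σ s a := by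
  obtain ⟨f, hf⟩ := htot (Ty.arr σ₀ σ) (Tm.lam x σ₀ s)
  cases hf with
  | lam _ _ _ _ h => exact ⟨M.ap f c, h c⟩

end Eval

/-- Condition N4 on the normalization operator. -/
def NormPreservesEval (Ω : NormOp) : Prop :=
  ∀ (M : Struc) (I : ℕ → ∀ σ, M.D σ), (∀ (σ : Ty) (s : Tm σ), ∃ a, Eval M I σ s a) →
    ∀ (σ : Ty) (s : Tm σ) (a : M.D σ), Eval M I σ s a ↔ Eval M I σ (Ω.nf s) a

namespace Interp

variable (M : Interp)

noncomputable def den {σ : Ty} (s : Tm σ) : M.D σ := (M.total σ s).choose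

def Holds (s : Tm Ty.o) : Prop := Eval M.toStruc M.I Ty.o s (M.bo.symm true)

def update (x : ℕ) (σ : Ty) (c : M.D σ) : Interp where
  toStruc := { M.toStruc with I := updD M.toStruc M.I x σ c }
  total τ s := by
    obtain ⟨a, ha⟩ := Eval.exists_of_updD M.total x σ c τ s
    exact ⟨a, ha.withAssignment _⟩

variable {M}

theorem eval_den {σ : Ty} (s : Tm σ) : Eval M.toStruc M.I σ s (M.den s) :=
  (M.total σ s).choose_spec

theorem den_eq_of_eval {σ : Ty} {s : Tm σ} {a : M.D σ} (h : Eval M.toStruc M.I σ s a) :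
    M.den s = a :=
  (eval_den s).det h

theorem den_app {σ τ : Ty} (s : Tm (Ty.arr σ τ)) (t : Tm σ) :
    M.den (Tm.app s t) = M.ap (M.den s) (M.den t) :=
  den_eq_of_eval (Eval.app (eval_den s) (eval_den t))

theorem den_nf {Ω : NormOp} (hN4 : NormPreservesEval Ω) {σ : Ty} (s : Tm σ) :
    M.den (Ω.nf s) = M.den s :=
  den_eq_of_eval ((hN4 M.toStruc M.I M.total σ s _).mp (eval_den s))

theorem holds_iff {s : Tm Ty.o} : M.Holds s ↔ M.bo (M.den s) = true := by
  rw [← Equiv.eq_symm_apply]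
  exact ⟨den_eq_of_eval, fun h => by rw [Holds, ← h]; exact eval_den s⟩

theorem den_eq_iff_holds_iff {s t : Tm Ty.o} : M.den s = M.den t ↔ (M.Holds s ↔ M.Holds t) := by
  rw [holds_iff, holds_iff, ← Bool.eq_iff_iff, M.bo.apply_eq_iff_eq]

theorem holds_not_iff {s : Tm Ty.o} : M.Holds (Tm.Not s) ↔ ¬M.Holds s := by
  have hneg : M.den (Tm.Not s) = M.bo.symm (!M.bo (M.den s)) := by
    rw [← M.hneg]
    exact den_eq_of_eval (Eval.app (Eval.neg M.I) (eval_den s))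
  rw [holds_iff, holds_iff, hneg, Equiv.apply_symm_apply]
  simp

theorem holds_eqn_iff {σ : Ty} {s t : Tm σ} : M.Holds (Tm.Eqn s t) ↔ M.den s = M.den t := by
  have heqn : M.den (Tm.Eqn s t) = M.ap (M.ap (M.eqv σ) (M.den s)) (M.den t) :=
    den_eq_of_eval (Eval.app (Eval.app (Eval.eq M.I σ) (eval_den s)) (eval_den t))
  rw [holds_iff, heqn, ← Equiv.eq_symm_apply, M.heq]

theorem holds_diseq_iff {σ : Ty} {s t : Tm σ} : M.Holds (Tm.Diseq s t) ↔ M.den s ≠ M.den t := by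
  rw [Tm.Diseq, holds_not_iff, holds_eqn_iff]

theorem satisfies_insert_iff {s : Tm Ty.o} {A : Set (Tm Ty.o)} :
    Satisfies M (insert s A) ↔ M.Holds s ∧ Satisfies M A :=
  Set.forall_mem_insert

theorem den_applyArgs_eq {σ ρ : Ty} (p : Args2 σ ρ) (hp : ∀ d ∈ p.diseqs, ¬M.Holds d)
    {h₁ h₂ : Tm σ} (hh : M.den h₁ = M.den h₂) :
    M.den (applyArgs h₁ p.left) = M.den (applyArgs h₂ p.right) := by
  induction p with
  | nil => exact hh
  | cons s t p ih =>
    have hst : M.den s = M.den t := by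
      simpa [holds_diseq_iff] using hp (Tm.Diseq s t) List.mem_cons_self
    exact ih (fun d hd => hp d (List.mem_cons_of_mem _ hd)) (by rw [den_app, den_app, hh, hst])

theorem exists_holds_diseqs {σ ρ : Ty} (p : Args2 σ ρ) {h : Tm σ}
    (hne : M.den (applyArgs h p.left) ≠ M.den (applyArgs h p.right)) :
    ∃ d ∈ p.diseqs, M.Holds d := by
  by_contra! hp
  exact hne (den_applyArgs_eq p hp rfl)

theorem update_den_var (x : ℕ) (σ : Ty) (c : M.D σ) : (M.update x σ c).den (Tm.var x σ) = c :=
  (den_eq_of_eval (M := M.update x σ c) ((Eval.var _ x σ).withAssignment _)).trans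
    (show updD M.toStruc M.I x σ c x σ = c by simp [updD])

theorem eval_update_of_not_freeIn {x : ℕ} {σ τ : Ty} (c : M.D σ) {s : Tm τ} {a : M.D τ}
    (hs : ¬FreeIn x σ s) (h : Eval M.toStruc M.I τ s a) :
    Eval (M.update x σ c).toStruc (M.update x σ c).I τ s a := by
  refine (h.of_agree_on_free (I' := updD M.toStruc M.I x σ c) fun y μ hy => ?_).withAssignment _
  have hne : ¬(y = x ∧ μ = σ) := by
    rintro ⟨rfl, rfl⟩
    exact hs hy
  rw [updD, dif_neg hne]

theorem update_den_of_not_freeIn {x : ℕ} {σ τ : Ty} (c : M.D σ) {s : Tm τ}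
    (hs : ¬FreeIn x σ s) : (M.update x σ c).den s = M.den s :=
  den_eq_of_eval (eval_update_of_not_freeIn c hs (eval_den s))

end Interp

namespace Satisfies

open Interp

variable {M : Interp} {A : Set (Tm Ty.o)}

theorem holds (hM : Satisfies M A) {s : Tm Ty.o} (hs : s ∈ A) : M.Holds s := hM s hs

theorem not_closedB (hM : Satisfies M A) : ¬ClosedB A := by
  rintro (⟨x, hx, hnx⟩ | ⟨α, x, hxx⟩)
  · exact holds_not_iff.mp (hM.holds hnx) (hM.holds hx)
  · exact holds_diseq_iff.mp (hM.holds hxx) rfl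

theorem dn (hM : Satisfies M A) {s : Tm Ty.o} (h : Tm.Not (Tm.Not s) ∈ A) :
    Satisfies M (insert s A) := by
  have hs := hM.holds h
  rw [holds_not_iff, holds_not_iff, not_not] at hs
  exact satisfies_insert_iff.mpr ⟨hs, hM⟩

theorem bq (hM : Satisfies M A) {s t : Tm Ty.o} (h : Tm.Eqn s t ∈ A) :
    Satisfies M (insert s (insert t A)) ∨
      Satisfies M (insert (Tm.Not s) (insert (Tm.Not t) A)) := by
  have hst := den_eq_iff_holds_iff.mp (holds_eqn_iff.mp (hM.holds h))
  simp only [satisfies_insert_iff, holds_not_iff]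
  by_cases hs : M.Holds s
  · exact Or.inl ⟨hs, hst.mp hs, hM⟩
  · exact Or.inr ⟨hs, mt hst.mpr hs, hM⟩

theorem be (hM : Satisfies M A) {s t : Tm Ty.o} (h : Tm.Diseq s t ∈ A) :
    Satisfies M (insert s (insert (Tm.Not t) A)) ∨
      Satisfies M (insert (Tm.Not s) (insert t A)) := by
  have hst := mt den_eq_iff_holds_iff.mpr (holds_diseq_iff.mp (hM.holds h))
  simp only [satisfies_insert_iff, holds_not_iff]
  by_cases hs : M.Holds s
  · exact Or.inl ⟨hs, fun ht => hst (iff_of_true hs ht), hM⟩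
  · exact Or.inr ⟨hs, not_not.mp fun ht => hst (iff_of_false hs ht), hM⟩

theorem fq {Ω : NormOp} (hN4 : NormPreservesEval Ω) (hM : Satisfies M A) {σ τ : Ty}
    {s t : Tm (Ty.arr σ τ)} (h : Tm.Eqn s t ∈ A) (u : Tm σ) :
    Satisfies M (insert (Tm.Eqn (Ω.nf (Tm.app s u)) (Ω.nf (Tm.app t u))) A) := by
  have hst := holds_eqn_iff.mp (hM.holds h)
  refine satisfies_insert_iff.mpr ⟨holds_eqn_iff.mpr ?_, hM⟩
  rw [den_nf hN4, den_nf hN4, den_app, den_app, hst]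

/-- By extensionality the values of `s` and `t` differ at some `c`; reassigning the fresh
variable `x` to `c` keeps `A` true and makes `s x ≠ t x` true. -/
theorem fe {Ω : NormOp} (hN4 : NormPreservesEval Ω) (hM : Satisfies M A) {σ τ : Ty}
    {s t : Tm (Ty.arr σ τ)} (h : Tm.Diseq s t ∈ A) {x : ℕ} (hx : ∀ u ∈ A, ¬FreeIn x σ u) :
    ∃ M' : Interp,
      Satisfies M' (insert (Tm.Diseq (Ω.nf (Tm.app s (Tm.var x σ)))
        (Ω.nf (Tm.app t (Tm.var x σ)))) A) := by
  obtain ⟨c, hc⟩ : ∃ c, M.ap (M.den s) c ≠ M.ap (M.den t) c := by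
    by_contra! hst
    exact holds_diseq_iff.mp (hM.holds h) (M.ext _ _ hst)
  have hfree : ¬FreeIn x σ s ∧ ¬FreeIn x σ t := by
    simpa [Tm.Diseq, Tm.Eqn, Tm.Not, FreeIn] using hx _ h
  refine ⟨M.update x σ c, satisfies_insert_iff.mpr ⟨holds_diseq_iff.mpr ?_, ?_⟩⟩
  · rw [den_nf hN4, den_nf hN4, den_app, den_app, update_den_var, update_den_of_not_freeIn c hfree.1,
      update_den_of_not_freeIn c hfree.2]
    exact hc
  · exact fun u hu => eval_update_of_not_freeIn c (hx u hu) (hM u hu)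

theorem mat (hM : Satisfies M A) {σ : Ty} {x : ℕ} {p : Args2 σ Ty.o}
    (hl : applyArgs (Tm.var x σ) p.left ∈ A) (hr : Tm.Not (applyArgs (Tm.var x σ) p.right) ∈ A) :
    ∃ d ∈ p.diseqs, Satisfies M (insert d A) := by
  have hne : M.den (applyArgs (Tm.var x σ) p.left) ≠ M.den (applyArgs (Tm.var x σ) p.right) :=
    fun heq => holds_not_iff.mp (hM.holds hr) ((den_eq_iff_holds_iff.mp heq).mp (hM.holds hl))
  obtain ⟨d, hd, hdM⟩ := exists_holds_diseqs p hne
  exact ⟨d, hd, satisfies_insert_iff.mpr ⟨hdM, hM⟩⟩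

theorem dec (hM : Satisfies M A) {σ : Ty} {α x : ℕ} {p : Args2 σ (Ty.sort α)}
    (h : Tm.Diseq (applyArgs (Tm.var x σ) p.left) (applyArgs (Tm.var x σ) p.right) ∈ A) :
    ∃ d ∈ p.diseqs, Satisfies M (insert d A) := by
  obtain ⟨d, hd, hdM⟩ := exists_holds_diseqs p (holds_diseq_iff.mp (hM.holds h))
  exact ⟨d, hd, satisfies_insert_iff.mpr ⟨hdM, hM⟩⟩

theorem con (hM : Satisfies M A) {α : ℕ} {s t u v : Tm (Ty.sort α)}
    (hst : Tm.Eqn s t ∈ A) (huv : Tm.Diseq u v ∈ A) :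
    Satisfies M (insert (Tm.Diseq s u) (insert (Tm.Diseq t u) A)) ∨
      Satisfies M (insert (Tm.Diseq s v) (insert (Tm.Diseq t v) A)) := by
  have hst := holds_eqn_iff.mp (hM.holds hst)
  have huv := holds_diseq_iff.mp (hM.holds huv)
  simp only [satisfies_insert_iff, holds_diseq_iff, ← hst]
  by_cases hsu : M.den s = M.den u
  · exact Or.inr ⟨hsu ▸ huv, hsu ▸ huv, hM⟩
  · exact Or.inl ⟨hsu, hsu, hM⟩

end Satisfies

/-- Soundness: assuming N4 (normalization preserves evaluation in every
interpretation), every refutable branch is unsatisfiable. -/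
theorem stmt16 (Ω : NormOp)
    (hN4 : ∀ (M : Struc) (I : ℕ → ∀ σ, M.D σ), (∀ (σ : Ty) (s : Tm σ), ∃ a, Eval M I σ s a) →
      ∀ (σ : Ty) (s : Tm σ) (a : M.D σ), Eval M I σ s a ↔ Eval M I σ (Ω.nf s) a)
    (A : Set (Tm Ty.o)) (h : Refutable Ω A) :
    ¬ ∃ M : Interp, Satisfies M A := by
  induction h with
  | closed hc => exact fun ⟨_, hM⟩ => hM.not_closedB hc
  | dn _ h _ ih => exact fun ⟨M, hM⟩ => ih ⟨M, hM.dn h⟩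
  | bq _ _ _ h _ _ ih₁ ih₂ =>
    exact fun ⟨M, hM⟩ => (hM.bq h).elim (fun hM' => ih₁ ⟨M, hM'⟩) (fun hM' => ih₂ ⟨M, hM'⟩)
  | be _ _ _ h _ _ ih₁ ih₂ =>
    exact fun ⟨M, hM⟩ => (hM.be h).elim (fun hM' => ih₁ ⟨M, hM'⟩) (fun hM' => ih₂ ⟨M, hM'⟩)
  | fq _ _ u _ h _ _ ih => exact fun ⟨M, hM⟩ => ih ⟨M, hM.fq hN4 h u⟩
  | fe _ _ _ _ h hx _ _ ih => exact fun ⟨_, hM⟩ => ih (hM.fe hN4 h hx)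
  | mat _ _ _ hl hr _ ih =>
    exact fun ⟨M, hM⟩ => let ⟨d, hd, hM'⟩ := hM.mat hl hr; ih d hd ⟨M, hM'⟩
  | dec _ _ _ h _ ih => exact fun ⟨M, hM⟩ => let ⟨d, hd, hM'⟩ := hM.dec h; ih d hd ⟨M, hM'⟩
  | con _ _ _ _ _ hst huv _ _ ih₁ ih₂ =>
    exact fun ⟨M, hM⟩ =>
      (hM.con hst huv).elim (fun hM' => ih₁ ⟨M, hM'⟩) (fun hM' => ih₂ ⟨M, hM'⟩)
end
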